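/- Suppose X, W are matrices with X symmetric, X ⪰ εI, X ⪯ ηI for 0 < ε ≤ η, and for a matrix pair (A, B) the block matrix [[X, XAᵀ + WᵀBᵀ],[AX + BW, X]] ⪰ εI. Set P = X⁻¹, K = W X⁻¹, A^cl = A + BK. Then the block matrix [[P, (A^cl)ᵀP],[PA^cl, P]] ⪰ (ε/η²) I. -/

import Mathlib

open Matrix

/-- Operator norm of a real matrix induced by the Euclidean (`l2`) norms. -/
noncomputable def opNorm {m n : Type*} [Fintype m] [Fintype n] [DecidableEq n]
    (M : Matrix m n ℝ) : ℝ :=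
  ‖LinearMap.toContinuousLinearMap (Matrix.toEuclideanLin M)‖

/-- Smallest eigenvalue of a (symmetric) real matrix. -/
noncomputable def lmin {n : Type*} [Fintype n] [DecidableEq n]
    (A : Matrix n n ℝ) : ℝ :=
  if h : A.IsHermitian then ⨅ i, h.eigenvalues i else 0

/-!
Conjugating the hypothesis by the symmetric matrix `D = diag(X⁻¹, X⁻¹)` turns the block matrix
built from `X` into the closed-loop block matrix and `ε • 1` into `ε • D²`. Since `X ≤ η • 1`
gives `η⁻¹ • 1 ≤ X⁻¹`, hence `η⁻² • 1 ≤ D²`, the claim follows.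
-/

open scoped MatrixOrder ComplexOrder

namespace Matrix

theorem PosSemidef.fromBlocks_diag {R ι κ : Type*} [Ring R] [PartialOrder R] [StarRing R]
    [IsOrderedAddMonoid R] [Fintype ι] [Fintype κ] {M : Matrix ι ι R} {N : Matrix κ κ R}
    (hM : M.PosSemidef) (hN : N.PosSemidef) : (fromBlocks M 0 0 N).PosSemidef := by
  rw [posSemidef_iff_dotProduct_mulVec] at hM hN ⊢
  refine ⟨hM.1.fromBlocks (by simp) hN.1, fun x => ?_⟩
  obtain ⟨u, v, rfl⟩ : ∃ u v, x = Sum.elim u v := ⟨_, _, (Sum.elim_comp_inl_inr x).symm⟩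
  simpa [fromBlocks_mulVec, Function.star_sumElim] using add_nonneg (hM.2 u) (hN.2 v)

theorem fromBlocks_diag_mul_fromBlocks_mul_fromBlocks_diag {α ι κ : Type*} [Fintype ι]
    [Fintype κ] [Semiring α] (Y₁ : Matrix ι ι α) (Y₂ : Matrix κ κ α) (P : Matrix ι ι α)
    (Q : Matrix ι κ α) (R : Matrix κ ι α) (S : Matrix κ κ α) (Z₁ : Matrix ι ι α)
    (Z₂ : Matrix κ κ α) :
    fromBlocks Y₁ 0 0 Y₂ * fromBlocks P Q R S * fromBlocks Z₁ 0 0 Z₂ =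
      fromBlocks (Y₁ * P * Z₁) (Y₁ * Q * Z₂) (Y₂ * R * Z₁) (Y₂ * S * Z₂) := by
  simp [fromBlocks_multiply]

section LoewnerOrder

variable {𝕜 ι κ : Type*} [RCLike 𝕜]

theorem fromBlocks_diag_le_fromBlocks_diag [Fintype ι] [Fintype κ]
    {M M' : Matrix ι ι 𝕜} {N N' : Matrix κ κ 𝕜} (hM : M ≤ M') (hN : N ≤ N') :
    fromBlocks M 0 0 N ≤ fromBlocks M' 0 0 N' := by
  rw [le_iff] at hM hN ⊢
  simpa [sub_eq_add_neg, fromBlocks_neg, fromBlocks_add] using hM.fromBlocks_diag hN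

theorem posDef_of_smul_one_le [DecidableEq ι] {X : Matrix ι ι 𝕜} {ε : ℝ} (hε : 0 < ε)
    (h : ε • 1 ≤ X) : X.PosDef := by
  simpa using PosDef.posSemidef_add (le_iff.1 h) (PosDef.one.smul hε)

theorem PosDef.inv_smul_one_le_inv [Fintype ι] [DecidableEq ι] {X : Matrix ι ι 𝕜}
    (hX : X.PosDef) {η : ℝ} (hη : 0 < η) (h : X ≤ η • 1) : η⁻¹ • 1 ≤ X⁻¹ := by
  have hdet : IsUnit X.det := (isUnit_iff_isUnit_det X).1 hX.isUnit
  have hXinv : X⁻¹ * X = 1 := nonsing_inv_mul X hdet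
  have hcomm : Commute X⁻¹ X := hXinv.trans (mul_nonsing_inv X hdet).symm
  have key : X⁻¹ - η⁻¹ • 1 = η⁻¹ • (X⁻¹ * (η • 1 - X)) := by
    rw [Matrix.mul_sub, hXinv, mul_smul_comm, Matrix.mul_one, smul_sub, inv_smul_smul₀ hη.ne']
  rw [← sub_nonneg, key]
  refine smul_nonneg (inv_nonneg.2 hη.le) (Commute.mul_nonneg ?_ (sub_nonneg.2 h) ?_)
  · exact nonneg_iff_posSemidef.2 hX.inv.posSemidef
  · exact ((Commute.one_right _).smul_right η).sub_right hcomm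

theorem sq_smul_one_le_mul_self [Fintype ι] [DecidableEq ι] {Y : Matrix ι ι 𝕜} {c : ℝ}
    (hc : 0 ≤ c) (h : c • 1 ≤ Y) : c ^ 2 • 1 ≤ Y * Y := by
  have key : Y * Y - c ^ 2 • 1 = (Y - c • 1) * (Y + c • 1) := by
    simp only [sub_mul, mul_add, smul_mul_smul, Matrix.mul_smul, Matrix.smul_mul,
      Matrix.one_mul, Matrix.mul_one, sq]
    abel
  have hcI : (0 : Matrix ι ι 𝕜) ≤ c • 1 := smul_nonneg hc zero_le_one
  have hcomm : Commute (c • 1 : Matrix ι ι 𝕜) Y := (Commute.one_left Y).smul_left c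
  rw [← sub_nonneg, key]
  exact Commute.mul_nonneg (sub_nonneg.2 h) (add_nonneg (hcI.trans h) hcI)
    (((Commute.refl Y).sub_left hcomm).add_right (hcomm.symm.sub_left (Commute.refl _)))

end LoewnerOrder

end Matrix

theorem fromBlocks_conj_eq_closedLoop {R : Type*} [CommRing R] {n m : Type*} [Fintype n]
    [DecidableEq n] [Fintype m] {X Y : Matrix n n R} (hXY : X * Y = 1) (hYX : Y * X = 1)
    (hY : Yᵀ = Y) (W : Matrix m n R) (A : Matrix n n R) (B : Matrix n m R) :
    fromBlocks Y 0 0 Y * fromBlocks X (X * Aᵀ + Wᵀ * Bᵀ) (A * X + B * W) X *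
        fromBlocks Y 0 0 Y =
      fromBlocks Y ((A + B * (W * Y))ᵀ * Y) (Y * (A + B * (W * Y))) Y := by
  rw [fromBlocks_diag_mul_fromBlocks_mul_fromBlocks_diag]
  simp only [hYX, Matrix.one_mul, Matrix.mul_add, ← Matrix.mul_assoc, Matrix.add_mul,
    transpose_add, transpose_mul, hY, fromBlocks_inj, add_left_inj, and_true, true_and]
  simp [Matrix.mul_assoc, hXY]

theorem stmt7_general {n m : ℕ} (X : Matrix (Fin n) (Fin n) ℝ)
    (W : Matrix (Fin m) (Fin n) ℝ) (A : Matrix (Fin n) (Fin n) ℝ)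
    (B : Matrix (Fin n) (Fin m) ℝ) (ε η : ℝ) (hε : 0 < ε) (hεη : ε ≤ η)
    (hXlo : (X - ε • (1 : Matrix (Fin n) (Fin n) ℝ)).PosSemidef)
    (hXhi : (η • (1 : Matrix (Fin n) (Fin n) ℝ) - X).PosSemidef)
    (hblk : (Matrix.fromBlocks X (X * Aᵀ + Wᵀ * Bᵀ) (A * X + B * W) X -
      ε • (1 : Matrix (Fin n ⊕ Fin n) (Fin n ⊕ Fin n) ℝ)).PosSemidef) :
    (Matrix.fromBlocks X⁻¹ ((A + B * (W * X⁻¹))ᵀ * X⁻¹)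
        (X⁻¹ * (A + B * (W * X⁻¹))) X⁻¹ -
      (ε / η ^ 2) • (1 : Matrix (Fin n ⊕ Fin n) (Fin n ⊕ Fin n) ℝ)).PosSemidef := by
  have hη : 0 < η := hε.trans_le hεη
  have hXpd : X.PosDef := posDef_of_smul_one_le hε (le_iff.2 hXlo)
  have hdet : IsUnit X.det := (isUnit_iff_isUnit_det X).1 hXpd.isUnit
  set D := fromBlocks X⁻¹ 0 0 X⁻¹
  have hYt : (X⁻¹)ᵀ = X⁻¹ := hXpd.inv.isHermitian.eq
  have hD : η⁻¹ • 1 ≤ D := by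
    have hY := hXpd.inv_smul_one_le_inv hη (le_iff.2 hXhi)
    rw [← fromBlocks_one, fromBlocks_smul, smul_zero]
    exact fromBlocks_diag_le_fromBlocks_diag hY hY
  have hDsa : star D = D := by
    simp [D, star_eq_conjTranspose, fromBlocks_transpose, hYt]
  rw [← le_iff]
  calc (ε / η ^ 2) • 1 = ε • (η⁻¹ ^ 2 • 1 : Matrix (Fin n ⊕ Fin n) (Fin n ⊕ Fin n) ℝ) := by
        rw [smul_smul, div_eq_mul_inv, inv_pow]
    _ ≤ ε • (D * D) :=
        smul_le_smul_of_nonneg_left (sq_smul_one_le_mul_self (by positivity) hD) hε.le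
    _ = star D * (ε • 1) * D := by rw [hDsa, Matrix.mul_smul, Matrix.mul_one, Matrix.smul_mul]
    _ ≤ star D * fromBlocks X (X * Aᵀ + Wᵀ * Bᵀ) (A * X + B * W) X * D :=
        star_left_conjugate_le_conjugate (le_iff.2 hblk) D
    _ = _ := by
        rw [hDsa]
        exact fromBlocks_conj_eq_closedLoop (mul_nonsing_inv X hdet) (nonsing_inv_mul X hdet)
          hYt W A B

theorem stmt7 {n m : ℕ} (X : Matrix (Fin n) (Fin n) ℝ) (hX : X.IsHermitian)
    (W : Matrix (Fin m) (Fin n) ℝ) (A : Matrix (Fin n) (Fin n) ℝ)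
    (B : Matrix (Fin n) (Fin m) ℝ) (ε η : ℝ) (hε : 0 < ε) (hεη : ε ≤ η)
    (hXlo : (X - ε • (1 : Matrix (Fin n) (Fin n) ℝ)).PosSemidef)
    (hXhi : (η • (1 : Matrix (Fin n) (Fin n) ℝ) - X).PosSemidef)
    (hblk : (Matrix.fromBlocks X (X * Aᵀ + Wᵀ * Bᵀ) (A * X + B * W) X -
      ε • (1 : Matrix (Fin n ⊕ Fin n) (Fin n ⊕ Fin n) ℝ)).PosSemidef) :
    (Matrix.fromBlocks X⁻¹ ((A + B * (W * X⁻¹))ᵀ * X⁻¹)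
        (X⁻¹ * (A + B * (W * X⁻¹))) X⁻¹ -
      (ε / η ^ 2) • (1 : Matrix (Fin n ⊕ Fin n) (Fin n ⊕ Fin n) ℝ)).PosSemidef :=
  stmt7_general X W A B ε η hε hεη hXlo hXhi hblk
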